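/- arXiv:2511.16336 — 3 statements merged into one kernel-verified Lean document; each statement's English description precedes it below -/
import Mathlib

section
/- A continuous directionally Lipschitzian function that is not locally Lipschitzian: Let n ≥ 1 and define f : ℝⁿ → ℝ by f(x) = Σᵢ₌₁ⁿ cbrt(xᵢ). Then (i) f is continuous on ℝⁿ; (ii) f is not Lipschitz continuous on any neighborhood of the origin; (iii) f is directionally Lipschitzian at x̄ = 0 with the unit vector u = (−1/√n, …, −1/√n) and constant L = 0: indeed, for every x ∈ ℝⁿ, every t > 0, and every v ∈ ℝⁿ with vᵢ < 0 for each i, one has f(x + t·v) ≤ f(x). -/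
open Filter Topology Metric Set

/-- The quantified directional Lipschitz estimate: `f(z + t•v) − f(z) ≤ t·L`
whenever `‖v − u‖ < δ`, `‖z − xbar‖ < δ`, `|f z − f xbar| < δ`, and `0 < t ≤ δ`. -/
def DirLipBound {n : ℕ} (f : EuclideanSpace ℝ (Fin n) → ℝ)
    (xbar u : EuclideanSpace ℝ (Fin n)) (L δ : ℝ) : Prop :=
  ∀ (v z : EuclideanSpace ℝ (Fin n)) (t : ℝ),
    ‖v - u‖ < δ → ‖z - xbar‖ < δ → |f z - f xbar| < δ → 0 < t → t ≤ δ →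
      f (z + t • v) - f z ≤ t * L

/-- `f` is directionally Lipschitzian at `xbar`. -/
def DirectionallyLipschitzAt {n : ℕ} (f : EuclideanSpace ℝ (Fin n) → ℝ)
    (xbar : EuclideanSpace ℝ (Fin n)) : Prop :=
  ∃ u : EuclideanSpace ℝ (Fin n), ‖u‖ = 1 ∧
    ∃ (L δ : ℝ), 0 < δ ∧ DirLipBound f xbar u L δ

/-- The real (odd) cube root: the unique `y` with `y³ = x`. -/
noncomputable def cbrt (x : ℝ) : ℝ :=
  if 0 ≤ x then x ^ ((1 : ℝ) / 3) else -((-x) ^ ((1 : ℝ) / 3))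

/-! Since `cbrt` is continuous and increasing, `∑ᵢ cbrt (xᵢ)` is continuous and decreases along
every direction with negative coordinates; every `v` with `‖v - u‖ < 1/√n` is such a direction,
because `|vᵢ - uᵢ| ≤ ‖v - u‖`. It is not Lipschitz near `0` because `cbrt (c³) = c` while
`‖c³ • e₁‖ = c³`, and `c / c³` is unbounded as `c → 0⁺`. -/

lemma cbrt_of_nonneg {x : ℝ} (hx : 0 ≤ x) : cbrt x = x ^ ((1 : ℝ) / 3) := if_pos hx

lemma cbrt_of_neg {x : ℝ} (hx : x < 0) : cbrt x = -((-x) ^ ((1 : ℝ) / 3)) := if_neg hx.not_ge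

@[simp]
lemma cbrt_zero : cbrt 0 = 0 := by
  simp [cbrt_of_nonneg le_rfl]

lemma cbrt_pow_three_of_nonneg {c : ℝ} (hc : 0 ≤ c) : cbrt (c ^ 3) = c := by
  rw [cbrt_of_nonneg (by positivity), ← Real.rpow_natCast, ← Real.rpow_mul hc]
  norm_num

lemma continuous_cbrt : Continuous cbrt :=
  Continuous.if_le (Real.continuous_rpow_const (by norm_num))
    ((Real.continuous_rpow_const (by norm_num)).comp continuous_neg).neg
    continuous_const continuous_id (fun x hx => by simp [← hx])

lemma monotone_cbrt : Monotone cbrt := by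
  intro a b hab
  rcases le_or_gt 0 a with ha | ha
  · rw [cbrt_of_nonneg ha, cbrt_of_nonneg (ha.trans hab)]
    exact Real.rpow_le_rpow ha hab (by norm_num)
  rw [cbrt_of_neg ha]
  rcases le_or_gt 0 b with hb | hb
  · rw [cbrt_of_nonneg hb]
    have := Real.rpow_nonneg hb ((1 : ℝ) / 3)
    have := Real.rpow_nonneg (neg_nonneg.mpr ha.le) ((1 : ℝ) / 3)
    linarith
  · rw [cbrt_of_neg hb, neg_le_neg_iff]
    exact Real.rpow_le_rpow (by linarith) (by linarith) (by norm_num)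

lemma exists_mul_lt_cbrt (K : ℝ) {r : ℝ} (hr : 0 < r) : ∃ a, 0 < a ∧ a < r ∧ K * a < cbrt a := by
  have hsmall : ∀ᶠ c in 𝓝[>] (0 : ℝ), 0 < c ∧ c ^ 3 < r ∧ K * c ^ 2 < 1 := by
    refine eventually_mem_nhdsWithin.and (nhdsWithin_le_nhds ?_)
    have hcube : Tendsto (fun c : ℝ => c ^ 3) (𝓝 0) (𝓝 0) := by
      simpa using (continuous_pow 3).tendsto (0 : ℝ)
    have hquad : Tendsto (fun c : ℝ => K * c ^ 2) (𝓝 0) (𝓝 0) := by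
      simpa using (by fun_prop : Continuous fun c : ℝ => K * c ^ 2).tendsto 0
    exact (hcube.eventually (gt_mem_nhds hr)).and (hquad.eventually (gt_mem_nhds one_pos))
  obtain ⟨c, hc, hcr, hKc⟩ := hsmall.exists
  refine ⟨c ^ 3, by positivity, hcr, ?_⟩
  rw [cbrt_pow_three_of_nonneg hc.le]
  nlinarith

lemma EuclideanSpace.norm_of_forall_abs_eq {ι : Type*} [Fintype ι] {u : EuclideanSpace ℝ ι}
    {c : ℝ} (hc : 0 ≤ c) (hu : ∀ i, |u i| = c) : ‖u‖ = √(Fintype.card ι) * c := by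
  simp only [EuclideanSpace.norm_eq, Real.norm_eq_abs, hu, Finset.sum_const, Finset.card_univ,
    nsmul_eq_mul]
  rw [Real.sqrt_mul (Nat.cast_nonneg _), Real.sqrt_sq hc]

lemma EuclideanSpace.apply_neg_of_norm_sub_lt {ι : Type*} [Fintype ι] {u v : EuclideanSpace ℝ ι}
    {δ : ℝ} (hu : ∀ i, u i = -δ) (hv : ‖v - u‖ < δ) (i : ι) : v i < 0 := by
  have h := (PiLp.norm_apply_le (v - u) i).trans_lt hv
  rw [PiLp.sub_apply, hu, Real.norm_eq_abs] at h
  linarith [(abs_lt.mp h).2]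

section cbrtSum

variable {ι : Type*} [Fintype ι]

noncomputable def cbrtSum (x : EuclideanSpace ℝ ι) : ℝ := ∑ i, cbrt (x i)

lemma continuous_cbrtSum : Continuous (cbrtSum (ι := ι)) :=
  continuous_finsetSum _ fun i _ => continuous_cbrt.comp (PiLp.continuous_apply 2 _ i)

@[simp]
lemma cbrtSum_zero : cbrtSum (0 : EuclideanSpace ℝ ι) = 0 := by
  simp [cbrtSum]

lemma cbrtSum_single [DecidableEq ι] (i : ι) (a : ℝ) :
    cbrtSum (EuclideanSpace.single i a) = cbrt a := by
  rw [cbrtSum, Finset.sum_eq_single i (fun j _ hj => by simp [hj]) (by simp)]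
  simp

lemma cbrtSum_le_cbrtSum {x y : EuclideanSpace ℝ ι} (h : ∀ i, x i ≤ y i) :
    cbrtSum x ≤ cbrtSum y :=
  Finset.sum_le_sum fun i _ => monotone_cbrt (h i)

lemma cbrtSum_add_smul_le (x : EuclideanSpace ℝ ι) {v : EuclideanSpace ℝ ι} {t : ℝ}
    (ht : 0 ≤ t) (hv : ∀ i, v i ≤ 0) : cbrtSum (x + t • v) ≤ cbrtSum x :=
  cbrtSum_le_cbrtSum fun i => by
    simpa using mul_nonpos_of_nonneg_of_nonpos ht (hv i)

lemma not_lipschitz_cbrtSum [Nonempty ι] {K r : ℝ} (hr : 0 < r) :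
    ¬ ∀ x ∈ ball (0 : EuclideanSpace ℝ ι) r, ∀ y ∈ ball (0 : EuclideanSpace ℝ ι) r,
      |cbrtSum x - cbrtSum y| ≤ K * ‖x - y‖ := by
  classical
  intro hK
  obtain ⟨a, ha, har, hKa⟩ := exists_mul_lt_cbrt K hr
  have hnorm : ‖EuclideanSpace.single (Classical.arbitrary ι) a‖ = a := by
    rw [PiLp.norm_single, Real.norm_of_nonneg ha.le]
  have := hK _ (by rwa [mem_ball_zero_iff, hnorm]) 0 (mem_ball_self hr)
  rw [sub_zero, hnorm, cbrtSum_zero, sub_zero, cbrtSum_single] at this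
  linarith [le_abs_self (cbrt a)]

end cbrtSum

/-- `f(x) = Σᵢ cbrt(xᵢ)` is continuous, not Lipschitz on any neighborhood of
the origin, yet directionally Lipschitzian at `0` with the unit vector
`u = (−1/√n, …, −1/√n)` and constant `L = 0`; indeed `f(x + t•v) ≤ f(x)`
whenever `t > 0` and all components of `v` are negative. -/
theorem cbrt_sum_directionallyLipschitz {n : ℕ} (hn : 1 ≤ n)
    (f : EuclideanSpace ℝ (Fin n) → ℝ)
    (hf : ∀ x, f x = ∑ i, cbrt (x i))
    (u : EuclideanSpace ℝ (Fin n)) (hu : ∀ i, u i = -(1 / Real.sqrt n)) :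
    Continuous f ∧
    (¬ ∃ (K r : ℝ), 0 < r ∧
      ∀ x ∈ ball (0 : EuclideanSpace ℝ (Fin n)) r,
        ∀ y ∈ ball (0 : EuclideanSpace ℝ (Fin n)) r,
          |f x - f y| ≤ K * ‖x - y‖) ∧
    ‖u‖ = 1 ∧
    (∀ (x v : EuclideanSpace ℝ (Fin n)) (t : ℝ),
      0 < t → (∀ i, v i < 0) → f (x + t • v) ≤ f x) ∧
    (∃ δ : ℝ, 0 < δ ∧ DirLipBound f 0 u 0 δ) := by
  obtain rfl : f = cbrtSum := funext hf
  have : Nonempty (Fin n) := ⟨⟨0, hn⟩⟩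
  have hsqrt : 0 < √(n : ℝ) := Real.sqrt_pos.mpr (by exact_mod_cast hn)
  have hδ : 0 < 1 / √(n : ℝ) := one_div_pos.mpr hsqrt
  have hdescent : ∀ (x v : EuclideanSpace ℝ (Fin n)) (t : ℝ),
      0 < t → (∀ i, v i < 0) → cbrtSum (x + t • v) ≤ cbrtSum x :=
    fun x v t ht hv => cbrtSum_add_smul_le x ht.le fun i => (hv i).le
  refine ⟨continuous_cbrtSum, fun ⟨K, r, hr, hK⟩ => not_lipschitz_cbrtSum hr hK, ?_, hdescent,
    1 / √(n : ℝ), hδ, ?_⟩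
  · rw [EuclideanSpace.norm_of_forall_abs_eq hδ.le fun i => by rw [hu, abs_neg, abs_of_pos hδ],
      Fintype.card_fin, mul_one_div_cancel hsqrt.ne']
  · intro v z t hv _ _ ht _
    have := hdescent z v t ht (EuclideanSpace.apply_neg_of_norm_sub_lt hu hv)
    linarith
end

section
/- Positivity of the scalarizing max-function at Pareto solutions of the regularized problem: Let x̄ be a Pareto optimal solution of the regularized multiobjective problem min{ Ψ(x) : x ∈ D }. Then for every γ > 0 and every x ∈ Ω one has φ_γ(x) := max{ ψᵢ(x) − ψᵢ(x̄) + γ, φᵢ(x) : i = 1, …, m } > 0, where the maximum is taken over all 2m numbers ψᵢ(x) − ψᵢ(x̄) + γ and φᵢ(x), i = 1, …, m. -/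
open Filter Topology Metric Set

/-- Positivity of the scalarizing max-function at Pareto solutions of the
proximally regularized multiobjective problem: if `xbar` is a Pareto optimal
solution of `min{Ψ(x) : x ∈ D}` where `ψᵢ(x) = fᵢ(x) + λ‖x − x̃‖²·υᵢ`,
`φᵢ(x) = fᵢ(x) − fᵢ(x̃)`, and `D = {x ∈ Ω : φᵢ(x) ≤ 0 ∀i}`, then for every
`γ > 0` and `x ∈ Ω` the maximum of the `2m` numbers
`ψᵢ(x) − ψᵢ(xbar) + γ, φᵢ(x)` is positive. -/
theorem scalarizing_max_positive {n m : ℕ} (hm : 0 < m)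
    (Ω : Set (EuclideanSpace ℝ (Fin n))) (hΩ : Ω.Nonempty)
    (f : Fin m → EuclideanSpace ℝ (Fin n) → ℝ)
    (xt : EuclideanSpace ℝ (Fin n)) (hxt : xt ∈ Ω)
    (lam : ℝ) (hlam : 0 < lam)
    (υ : Fin m → ℝ) (hυpos : ∀ i, 0 < υ i)
    (hυunit : Real.sqrt (∑ i, (υ i) ^ 2) = 1)
    (ψ φ : Fin m → EuclideanSpace ℝ (Fin n) → ℝ)
    (hψ : ∀ i x, ψ i x = f i x + lam * ‖x - xt‖ ^ 2 * υ i)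
    (hφ : ∀ i x, φ i x = f i x - f i xt)
    (D : Set (EuclideanSpace ℝ (Fin n)))
    (hD : D = {x ∈ Ω | ∀ i, φ i x ≤ 0})
    (xbar : EuclideanSpace ℝ (Fin n)) (hxbar : xbar ∈ D)
    (hPareto : ¬ ∃ x ∈ D, (∀ i, ψ i x ≤ ψ i xbar) ∧ ∃ j, ψ j x < ψ j xbar) :
    ∀ γ : ℝ, 0 < γ → ∀ x ∈ Ω,
      0 < ⨆ i : Fin m, max (ψ i x - ψ i xbar + γ) (φ i x) := by
  intro γ hγ x hx
  by_contra h
  push_neg at h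
  have hne : Nonempty (Fin m) := ⟨⟨0, hm⟩⟩
  have hbdd : BddAbove (Set.range fun i : Fin m => max (ψ i x - ψ i xbar + γ) (φ i x)) :=
    Set.Finite.bddAbove (Set.finite_range _)
  have hle : ∀ i : Fin m, max (ψ i x - ψ i xbar + γ) (φ i x) ≤ 0 := fun i =>
    le_trans (le_ciSup hbdd i) h
  apply hPareto
  refine ⟨x, ?_, fun i => ?_, ⟨0, hm⟩, ?_⟩
  · rw [hD]
    exact ⟨hx, fun i => le_trans (le_max_right _ _) (hle i)⟩
  · have := le_trans (le_max_left _ _) (hle i)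
    linarith
  · have := le_trans (le_max_left _ _) (hle ⟨0, hm⟩)
    linarith
end

section
/- Directional Lipschitz property at the non-Lipschitz point in the bi-objective example: the function f₂ : ℝ → ℝ defined by f₂(x) = cbrt(x) for x > 0 and f₂(x) = x² + x for x ≤ 0 is not Lipschitz continuous on any neighborhood of 0 (indeed ∂∞ f₂(0) = [0, +∞)), yet f₂ is directionally Lipschitzian at 0 with the unit vector u = −1. -/
open Filter Topology Metric Set

/-- The Fréchet (regular) subdifferential of `f : ℝ → ℝ` at `x`:
`{v | liminf_{y → x} (f y − f x − v·(y − x))/|y − x| ≥ 0}`, written in the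
equivalent ε-form. -/
def frechetSubR (f : ℝ → ℝ) (x : ℝ) : Set ℝ :=
  {v | ∀ ε : ℝ, 0 < ε →
    ∀ᶠ y in 𝓝 x, f x + v * (y - x) - ε * |y - x| ≤ f y}

/-- The limiting (Mordukhovich) subdifferential of `f : ℝ → ℝ` at `x`. -/
def limitingSubR (f : ℝ → ℝ) (x : ℝ) : Set ℝ :=
  {v | ∃ xs vs : ℕ → ℝ,
    Tendsto xs atTop (𝓝 x) ∧
    Tendsto (fun k => f (xs k)) atTop (𝓝 (f x)) ∧
    (∀ k, vs k ∈ frechetSubR f (xs k)) ∧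
    Tendsto vs atTop (𝓝 v)}

/-- The singular (horizon) subdifferential of `f : ℝ → ℝ` at `x`. -/
def singularSubR (f : ℝ → ℝ) (x : ℝ) : Set ℝ :=
  {v | ∃ xs vs ls : ℕ → ℝ,
    Tendsto xs atTop (𝓝 x) ∧
    Tendsto (fun k => f (xs k)) atTop (𝓝 (f x)) ∧
    (∀ k, 0 < ls k) ∧ Tendsto ls atTop (𝓝 0) ∧
    (∀ k, vs k ∈ frechetSubR f (xs k)) ∧
    Tendsto (fun k => ls k * vs k) atTop (𝓝 v)}

/-- The quantified directional Lipschitz estimate on the real line. -/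
def DirLipBoundR (f : ℝ → ℝ) (xbar u L δ : ℝ) : Prop :=
  ∀ v z t : ℝ, |v - u| < δ → |z - xbar| < δ → |f z - f xbar| < δ →
    0 < t → t ≤ δ → f (z + t * v) - f z ≤ t * L

/-!
On `(-1/2, ∞)` the function `f₂` is nondecreasing. This alone makes every Fréchet subgradient
near `0` nonnegative, so `∂∞ f₂(0) ⊆ [0, ∞)`, and gives the directional estimate with `L = 0`
in every direction `u < 0`, since moving left cannot increase `f₂`. Conversely, the slope
`x^(-2/3)` of the cube root blows up at `0⁺`, which rules out a Lipschitz bound, and rescaling the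
derivatives `f₂'(xₖ) → ∞` along `xₖ ↓ 0` produces every `v ≥ 0` as a singular subgradient.
-/

lemma HasDerivAt.mem_frechetSubR {f : ℝ → ℝ} {d x : ℝ} (h : HasDerivAt f d x) :
    d ∈ frechetSubR f x := by
  intro ε hε
  filter_upwards [(hasDerivAt_iff_isLittleO.1 h).bound hε] with y hy
  rw [Real.norm_eq_abs, Real.norm_eq_abs, smul_eq_mul] at hy
  linarith [neg_abs_le (f y - f x - (y - x) * d)]

namespace MonotoneOn

variable {f : ℝ → ℝ} {s : Set ℝ} {x : ℝ}

lemma nonneg_of_mem_frechetSubR (hf : MonotoneOn f s) (hs : s ∈ 𝓝 x) {v : ℝ}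
    (hv : v ∈ frechetSubR f x) : 0 ≤ v := by
  by_contra! hneg
  obtain ⟨y, ⟨hy, hys⟩, hyx⟩ :=
    (((hv (-v / 2) (by linarith)).and hs).filter_mono nhdsWithin_le_nhds
      |>.and (self_mem_nhdsWithin : Iio x ∈ 𝓝[<] x)).exists
  have hfyx : f y ≤ f x := hf hys (mem_of_mem_nhds hs) hyx.le
  rw [abs_of_neg (sub_neg.2 hyx)] at hy
  nlinarith

lemma singularSubR_subset_Ici (hf : MonotoneOn f s) (hs : s ∈ 𝓝 x) :
    singularSubR f x ⊆ Ici 0 := by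
  rintro v ⟨xs, vs, ls, hxs, -, hls, -, hvs, hlim⟩
  refine ge_of_tendsto hlim ?_
  filter_upwards [hxs (interior_mem_nhds.2 hs)] with k hk
  exact mul_nonneg (hls k).le
    (hf.nonneg_of_mem_frechetSubR (mem_interior_iff_mem_nhds.1 hk) (hvs k))

lemma dirLipBoundR_of_neg (hf : MonotoneOn f s) (hs : s ∈ 𝓝 x) {u : ℝ} (hu : u < 0) :
    ∃ δ, 0 < δ ∧ DirLipBoundR f x u 0 δ := by
  obtain ⟨r, hr, hball⟩ := Metric.mem_nhds_iff.1 hs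
  have h12u : 0 < 1 - 2 * u := by linarith
  set δ := min (-u) (r / (1 - 2 * u))
  have hδu : δ ≤ -u := min_le_left _ _
  have hδr : δ * (1 - 2 * u) ≤ r := (le_div_iff₀ h12u).1 (min_le_right _ _)
  refine ⟨δ, lt_min (by linarith) (div_pos hr h12u), ?_⟩
  intro v z t hv hz _ ht htδ
  obtain ⟨hv₁, hv₂⟩ := abs_lt.1 hv
  obtain ⟨hz₁, hz₂⟩ := abs_lt.1 hz
  have hzs : z ∈ s := hball <| by
    rw [mem_ball, Real.dist_eq, abs_lt]; constructor <;> nlinarith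
  have hzt : z + t * v ∈ s := hball <| by
    rw [mem_ball, Real.dist_eq, abs_lt]; constructor <;> nlinarith
  linarith [hf hzt hzs (by nlinarith)]

end MonotoneOn

lemma Ici_subset_singularSubR_of_tendsto_atTop {f : ℝ → ℝ} {x : ℝ} {xs vs : ℕ → ℝ}
    (hxs : Tendsto xs atTop (𝓝 x)) (hfxs : Tendsto (f ∘ xs) atTop (𝓝 (f x)))
    (hvs : ∀ k, vs k ∈ frechetSubR f (xs k)) (hpos : ∀ k, 0 < vs k)
    (htop : Tendsto vs atTop atTop) : Ici 0 ⊆ singularSubR f x := by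
  intro v (hv : 0 ≤ v)
  -- rescale by `1 / vs k`, nudged so that the scalars stay positive when `v = 0`
  have hw : Tendsto (fun k : ℕ => v + 1 / ((k : ℝ) + 1)) atTop (𝓝 v) := by
    simpa using tendsto_const_nhds.add (tendsto_one_div_add_atTop_nhds_zero_nat (𝕜 := ℝ))
  refine ⟨xs, vs, fun k => (v + 1 / ((k : ℝ) + 1)) / vs k, hxs, hfxs,
    fun k => div_pos (by positivity) (hpos k), ?_, hvs, ?_⟩
  · simpa [div_eq_mul_inv] using hw.mul (tendsto_inv_atTop_zero.comp htop)
  · refine hw.congr fun k => ?_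
    field_simp [(hpos k).ne']

lemma not_exists_lipschitz_ball_of_tendsto_slope {f : ℝ → ℝ} {x : ℝ}
    (h : Tendsto (slope f x) (𝓝[>] x) atTop) :
    ¬ ∃ K r : ℝ, 0 < r ∧ ∀ y ∈ ball x r, ∀ z ∈ ball x r, |f y - f z| ≤ K * |y - z| := by
  rintro ⟨K, r, hr, H⟩
  obtain ⟨y, ⟨hyK, hyr⟩, hxy⟩ := ((h.eventually_gt_atTop K).and
    (nhdsWithin_le_nhds (ball_mem_nhds x hr))).and self_mem_nhdsWithin |>.exists
  have hLip := H y hyr x (mem_ball_self hr)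
  rw [abs_of_pos (sub_pos.2 hxy)] at hLip
  rw [slope_def_field, lt_div_iff₀ (sub_pos.2 hxy)] at hyK
  linarith [le_abs_self (f y - f x)]

noncomputable def exampleF₂ (x : ℝ) : ℝ := if 0 < x then cbrt x else x ^ 2 + x

lemma exampleF₂_of_pos {x : ℝ} (hx : 0 < x) : exampleF₂ x = x ^ (1 / 3 : ℝ) := by
  rw [exampleF₂, if_pos hx, cbrt, if_pos hx.le]

lemma exampleF₂_of_nonpos {x : ℝ} (hx : x ≤ 0) : exampleF₂ x = x ^ 2 + x :=
  if_neg hx.not_gt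

lemma monotoneOn_exampleF₂ : MonotoneOn exampleF₂ (Ioi (-1 / 2)) := by
  intro a (ha : -1 / 2 < a) b (hb : -1 / 2 < b) hab
  rcases lt_or_ge 0 a with ha0 | ha0
  · rw [exampleF₂_of_pos ha0, exampleF₂_of_pos (ha0.trans_le hab)]
    exact Real.rpow_le_rpow ha0.le hab (by norm_num)
  rw [exampleF₂_of_nonpos ha0]
  rcases lt_or_ge 0 b with hb0 | hb0
  · rw [exampleF₂_of_pos hb0]
    nlinarith [Real.rpow_nonneg hb0.le (1 / 3 : ℝ)]
  · rw [exampleF₂_of_nonpos hb0]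
    nlinarith

lemma hasDerivAt_exampleF₂ {x : ℝ} (hx : 0 < x) :
    HasDerivAt exampleF₂ (1 / 3 * x ^ (-(2 / 3) : ℝ)) x := by
  have h := Real.hasDerivAt_rpow_const (p := 1 / 3) (Or.inl hx.ne')
  rw [show (1 / 3 : ℝ) - 1 = -(2 / 3) by norm_num] at h
  refine h.congr_of_eventuallyEq ?_
  filter_upwards [Ioi_mem_nhds hx] with y hy
  exact exampleF₂_of_pos hy

lemma tendsto_exampleF₂_nhdsGT_zero : Tendsto exampleF₂ (𝓝[>] 0) (𝓝 (exampleF₂ 0)) := by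
  have h := (Real.continuousAt_rpow_const 0 (1 / 3) (Or.inr (by norm_num))).tendsto
  rw [Real.zero_rpow (by norm_num)] at h
  rw [show exampleF₂ 0 = 0 by simp [exampleF₂]]
  refine (h.mono_left nhdsWithin_le_nhds).congr' ?_
  filter_upwards [self_mem_nhdsWithin] with y hy
  exact (exampleF₂_of_pos hy).symm

lemma tendsto_slope_exampleF₂_zero : Tendsto (slope exampleF₂ 0) (𝓝[>] 0) atTop := by
  refine (tendsto_rpow_neg_nhdsGT_zero (by norm_num : -(2 / 3 : ℝ) < 0)).congr' ?_
  filter_upwards [self_mem_nhdsWithin] with y (hy : 0 < y)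
  rw [slope_def_field, exampleF₂_of_pos hy, exampleF₂_of_nonpos le_rfl,
    show -(2 / 3 : ℝ) = 1 / 3 - 1 by norm_num, Real.rpow_sub_one hy.ne']
  ring

/-- The function `f₂(x) = cbrt x` for `x > 0`, `f₂(x) = x² + x` for `x ≤ 0`, is
not Lipschitz on any neighborhood of `0` (indeed `∂∞ f₂(0) = [0, ∞)`), yet it
is directionally Lipschitzian at `0` with the unit vector `u = −1`. -/
theorem f2_directionallyLipschitz (f₂ : ℝ → ℝ)
    (hf₂ : ∀ x : ℝ, f₂ x = if 0 < x then cbrt x else x ^ 2 + x) :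
    (¬ ∃ (K r : ℝ), 0 < r ∧ ∀ x ∈ ball (0 : ℝ) r, ∀ y ∈ ball (0 : ℝ) r,
      |f₂ x - f₂ y| ≤ K * |x - y|) ∧
    singularSubR f₂ 0 = Ici (0 : ℝ) ∧
    (∃ L δ : ℝ, 0 < δ ∧ DirLipBoundR f₂ 0 (-1) L δ) := by
  obtain rfl : f₂ = exampleF₂ := funext hf₂
  have hnhds : Ioi (-1 / 2) ∈ 𝓝 (0 : ℝ) := Ioi_mem_nhds (by norm_num)
  have hxs : Tendsto (fun k : ℕ => 1 / ((k : ℝ) + 1)) atTop (𝓝[>] 0) :=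
    tendsto_nhdsWithin_iff.2
      ⟨tendsto_one_div_add_atTop_nhds_zero_nat,
        .of_forall fun _ => mem_Ioi.2 Nat.one_div_pos_of_nat⟩
  have hderiv :
      Tendsto (fun k : ℕ => 1 / 3 * (1 / ((k : ℝ) + 1)) ^ (-(2 / 3) : ℝ)) atTop atTop :=
    ((tendsto_rpow_neg_nhdsGT_zero (by norm_num)).const_mul_atTop (by norm_num)).comp hxs
  refine ⟨not_exists_lipschitz_ball_of_tendsto_slope tendsto_slope_exampleF₂_zero, ?_, ?_⟩
  · refine (monotoneOn_exampleF₂.singularSubR_subset_Ici hnhds).antisymm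
      (Ici_subset_singularSubR_of_tendsto_atTop (hxs.mono_right nhdsWithin_le_nhds)
        (tendsto_exampleF₂_nhdsGT_zero.comp hxs)
        (fun _ => (hasDerivAt_exampleF₂ (by positivity)).mem_frechetSubR)
        (fun _ => mul_pos (by norm_num) (Real.rpow_pos_of_pos (by positivity) _)) hderiv)
  · obtain ⟨δ, hδ, h⟩ := monotoneOn_exampleF₂.dirLipBoundR_of_neg hnhds neg_one_lt_zero
    exact ⟨0, δ, hδ, h⟩
end
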